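/- Let R be a ring, F a left R-module, B₁ ∈ R^{ℓ×ℓ₁}, B₂ ∈ R^{ℓ×ℓ₂}, and suppose C = [C₁; C₂] ∈ R^{(ℓ₁+ℓ₂)×m} generates the right nullspace of [B₁ B₂] in the sense that every solution over F of [B₁ B₂]·v = 0 with v ∈ F^{ℓ₁+ℓ₂} is of the form v = Cw for some w ∈ F^m. Then B₁F^{ℓ₁} ∩ B₂F^{ℓ₂} = (B₁C₁)F^m. -/
import Mathlib

/-- Action of an operator matrix over `R` on a column vector over an `R`-module `F`. -/
def actOn {R F : Type*} [Ring R] [AddCommGroup F] [Module R F]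
    {a b : ℕ} (A : Matrix (Fin a) (Fin b) R) (f : Fin b → F) : Fin a → F :=
  fun i => ∑ j, A i j • f j

lemma actOn_mul {R F : Type*} [Ring R] [AddCommGroup F] [Module R F]
    {a b c : ℕ} (A : Matrix (Fin a) (Fin b) R) (B : Matrix (Fin b) (Fin c) R)
    (f : Fin c → F) : actOn (A * B) f = actOn A (actOn B f) := by
  funext i
  simp only [actOn, Matrix.mul_apply, Finset.sum_smul, Finset.smul_sum, mul_smul]
  exact Finset.sum_comm

theorem stmt10 {R F : Type*} [Ring R] [AddCommGroup F] [Module R F]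
    {l l₁ l₂ m : ℕ} (B₁ : Matrix (Fin l) (Fin l₁) R) (B₂ : Matrix (Fin l) (Fin l₂) R)
    (C₁ : Matrix (Fin l₁) (Fin m) R) (C₂ : Matrix (Fin l₂) (Fin m) R)
    -- the columns of C = [C₁; C₂] lie in the nullspace of [B₁ B₂] over F:
    (hC0 : ∀ w : Fin m → F, actOn B₁ (actOn C₁ w) + actOn B₂ (actOn C₂ w) = 0)
    -- every solution over F of [B₁ B₂]·v = 0 is of the form v = Cw:
    (hgen : ∀ (v₁ : Fin l₁ → F) (v₂ : Fin l₂ → F),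
      actOn B₁ v₁ + actOn B₂ v₂ = 0 →
      ∃ w : Fin m → F, v₁ = actOn C₁ w ∧ v₂ = actOn C₂ w) :
    {h : Fin l → F | ∃ f₁, h = actOn B₁ f₁} ∩ {h | ∃ f₂, h = actOn B₂ f₂}
      = {h | ∃ w : Fin m → F, h = actOn (B₁ * C₁) w} := by
  ext h
  simp only [Set.mem_inter_iff, Set.mem_setOf_eq]
  constructor
  · rintro ⟨⟨f₁, rfl⟩, ⟨f₂, hf₂⟩⟩
    have hnull : actOn B₁ f₁ + actOn B₂ (-f₂) = 0 := by
      have : actOn B₂ (-f₂) = -actOn B₂ f₂ := by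
        funext i; simp [actOn]
      rw [this, hf₂]; abel
    obtain ⟨w, hw1, _⟩ := hgen f₁ (-f₂) hnull
    exact ⟨w, by rw [actOn_mul, ← hw1]⟩
  · rintro ⟨w, rfl⟩
    refine ⟨⟨actOn C₁ w, actOn_mul _ _ _⟩, ⟨-(actOn C₂ w), ?_⟩⟩
    have := hC0 w
    rw [actOn_mul]
    have hneg : actOn B₂ (-(actOn C₂ w)) = -actOn B₂ (actOn C₂ w) := by
      funext i; simp [actOn]
    rw [hneg]
    linear_combination (norm := abel) this
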